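/- Under Assumption A1 and the null hypothesis H0, for any fixed distinct lags i ≠ j (i, j ≥ 1), the covariance between the normalized empirical autocovariances of the squared errors vanishes asymptotically: lim_{n→∞} Cov(n^{1/2} γ_n(i), n^{1/2} γ_n(j)) = 0, where n^{1/2} γ_n(i) = n^{−1/2} Σ_{t=i+1}^n (u_t² − E(u_t²))(u_{t−i}² − E(u_{t−i}²)). -/

import Mathlib

open MeasureTheory ProbabilityTheory Filter Finset Set Topology

noncomputable section

/-- A function is piecewise Lipschitz on `(0,1]`: there are finitely many mutually disjoint
intervals covering `(0,1]` on each of which the function is Lipschitz. -/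
def PiecewiseLipschitzOn01 (g : ℝ → ℝ) : Prop :=
  ∃ (q : ℕ) (I : Fin q → Set ℝ) (C : Fin q → NNReal),
    (∀ l, (I l).OrdConnected) ∧ Pairwise (Function.onFun Disjoint I) ∧
      (⋃ l, I l) = Set.Ioc (0 : ℝ) 1 ∧ ∀ l, LipschitzOnWith (C l) g (I l)

/-- Convergence in distribution (weak convergence of the laws of `X n` under `μ` to `ν`). -/
def TendstoInDistribution {Ω E : Type*} [MeasurableSpace Ω] [MeasurableSpace E]
    [TopologicalSpace E] (X : ℕ → Ω → E) (μ : Measure Ω) (ν : Measure E) : Prop :=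
  ∀ f : BoundedContinuousFunction E ℝ,
    Tendsto (fun n => ∫ ω, f (X n ω) ∂μ) atTop (𝓝 (∫ x, f x ∂ν))

/-- `X n = o_p(1)` : convergence to zero in probability. -/
def TendstoZeroInProb {Ω : Type*} [MeasurableSpace Ω] (μ : Measure Ω) (X : ℕ → Ω → ℝ) : Prop :=
  ∀ δ : ℝ, 0 < δ → Tendsto (fun n => (μ {ω | δ ≤ |X n ω|}).toReal) atTop (𝓝 0)

/-- An i.i.d. sequence of real random variables (indexed by `ι`, with reference index `t0`). -/
def IsIIDSeq {Ω : Type*} [MeasurableSpace Ω] (μ : Measure Ω) {ι : Type*}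
    (ε : ι → Ω → ℝ) (t0 : ι) : Prop :=
  (∀ t, Measurable (ε t)) ∧
    iIndepFun ε μ ∧
    ∀ t, IdentDistrib (ε t) (ε t0) μ μ

/-- The chi-square law with `m` degrees of freedom, as a Gamma(m/2, 1/2) law. -/
def chiSqMeasure (m : ℕ) : Measure ℝ := gammaMeasure ((m : ℝ) / 2) (1 / 2)

/-- `ν` is a centered Gaussian law on `Fin m → ℝ` with covariance matrix `S`
(characterized through one-dimensional projections). -/
def IsCenteredGaussianWithCov {m : ℕ} (ν : Measure (Fin m → ℝ))
    (S : Matrix (Fin m) (Fin m) ℝ) : Prop :=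
  IsProbabilityMeasure ν ∧ ∀ a : Fin m → ℝ,
    ν.map (fun z => ∑ i, a i * z i) =
      gaussianReal 0 (Real.toNNReal (∑ i, ∑ j, a i * S i j * a j))

/-- The matrix `Σ = (v/4) M`, `M` having diagonal entries `a` and off-diagonal entries 1. -/
def sigmaMat (m : ℕ) (v a : ℝ) : Matrix (Fin m) (Fin m) ℝ :=
  Matrix.of fun i j => (v / 4) * (if i = j then a else 1)

/-- The time-varying volatility `h_t = g(t/n)`. -/
def hvol (g : ℝ → ℝ) (n : ℕ) (t : ℤ) : ℝ := g ((t : ℝ) / (n : ℝ))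

/-- The autoregression residual `u_t(θ)`, with the convention `u_t(θ) = 0` for `t ≤ 0`. -/
def resid {Ω : Type*} (x : ℕ → ℤ → Ω → ℝ) {p : ℕ} (θ : Fin p → ℝ) (n : ℕ) (t : ℤ)
    (ω : Ω) : ℝ :=
  if 1 ≤ t then x n t ω - ∑ i : Fin p, θ i * x n (t - ((i : ℤ) + 1)) ω else 0

/-- The design matrix of the GLS estimator. -/
def glsMat {Ω : Type*} (x : ℕ → ℤ → Ω → ℝ) (g : ℝ → ℝ) (p n : ℕ) (ω : Ω) :
    Matrix (Fin p) (Fin p) ℝ :=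
  Matrix.of fun i j => ∑ t ∈ Finset.Icc (1 : ℤ) (n : ℤ),
    ((hvol g n t) ^ 2)⁻¹ * (x n (t - 1 - (i : ℤ)) ω * x n (t - 1 - (j : ℤ)) ω)

def glsVec {Ω : Type*} (x : ℕ → ℤ → Ω → ℝ) (g : ℝ → ℝ) (p n : ℕ) (ω : Ω) : Fin p → ℝ :=
  fun i => ∑ t ∈ Finset.Icc (1 : ℤ) (n : ℤ),
    ((hvol g n t) ^ 2)⁻¹ * (x n t ω * x n (t - 1 - (i : ℤ)) ω)

/-- The GLS estimator `θ̂`. -/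
def glsEst {Ω : Type*} (x : ℕ → ℤ → Ω → ℝ) (g : ℝ → ℝ) (p n : ℕ) (ω : Ω) : Fin p → ℝ :=
  Matrix.mulVec (glsMat x g p n ω)⁻¹ (glsVec x g p n ω)

/-- The design matrix of the OLS estimator. -/
def olsMat {Ω : Type*} (x : ℕ → ℤ → Ω → ℝ) (p n : ℕ) (ω : Ω) : Matrix (Fin p) (Fin p) ℝ :=
  Matrix.of fun i j => ∑ t ∈ Finset.Icc (1 : ℤ) (n : ℤ),
    x n (t - 1 - (i : ℤ)) ω * x n (t - 1 - (j : ℤ)) ω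

def olsVec {Ω : Type*} (x : ℕ → ℤ → Ω → ℝ) (p n : ℕ) (ω : Ω) : Fin p → ℝ :=
  fun i => ∑ t ∈ Finset.Icc (1 : ℤ) (n : ℤ), x n t ω * x n (t - 1 - (i : ℤ)) ω

/-- The OLS estimator `θ̌`. -/
def olsEst {Ω : Type*} (x : ℕ → ℤ → Ω → ℝ) (p n : ℕ) (ω : Ω) : Fin p → ℝ :=
  Matrix.mulVec (olsMat x p n ω)⁻¹ (olsVec x p n ω)

/-- The normalized score vector `S(θ)` (built with the true volatility `h_t`). -/
def glsScore {Ω : Type*} (x : ℕ → ℤ → Ω → ℝ) (g : ℝ → ℝ) (p m n : ℕ) (θ : Fin p → ℝ)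
    (ω : Ω) : Fin m → ℝ :=
  fun j => (1 / (2 * Real.sqrt (n : ℝ))) * ∑ t ∈ Finset.Icc (1 : ℤ) (n : ℤ),
    ((resid x θ n t ω ^ 2 / hvol g n t ^ 2 - 1) *
      (resid x θ n (t - ((j : ℤ) + 1)) ω ^ 2 / hvol g n t ^ 2))

/-- `n⁻¹ Σ u_t(θ̂)⁴ h_t⁻⁴`, the estimator of `E ε⁴`. -/
def glsE4 {Ω : Type*} (x : ℕ → ℤ → Ω → ℝ) (g : ℝ → ℝ) (p n : ℕ) (ω : Ω) : ℝ :=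
  (n : ℝ)⁻¹ * ∑ t ∈ Finset.Icc (1 : ℤ) (n : ℤ),
    resid x (glsEst x g p n ω) n t ω ^ 4 / hvol g n t ^ 4

def glsE2 {Ω : Type*} (x : ℕ → ℤ → Ω → ℝ) (g : ℝ → ℝ) (p n : ℕ) (ω : Ω) : ℝ :=
  (n : ℝ)⁻¹ * ∑ t ∈ Finset.Icc (1 : ℤ) (n : ℤ),
    resid x (glsEst x g p n ω) n t ω ^ 2 / hvol g n t ^ 2

def glsE8 {Ω : Type*} (x : ℕ → ℤ → Ω → ℝ) (g : ℝ → ℝ) (p n : ℕ) (ω : Ω) : ℝ :=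
  (n : ℝ)⁻¹ * ∑ t ∈ Finset.Icc (1 : ℤ) (n : ℤ),
    resid x (glsEst x g p n ω) n t ω ^ 8 / hvol g n t ^ 8

/-- The estimated weight matrix `Σ̂` of the (infeasible) GLS ARCH-LM statistic. -/
def glsSigma {Ω : Type*} (x : ℕ → ℤ → Ω → ℝ) (g : ℝ → ℝ) (p m n : ℕ) (ω : Ω) :
    Matrix (Fin m) (Fin m) ℝ :=
  sigmaMat m (glsE4 x g p n ω - (glsE2 x g p n ω) ^ 2) (glsE4 x g p n ω)

/-- The (infeasible) GLS ARCH-LM statistic `Q_GLS`. -/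
def QGLS {Ω : Type*} (x : ℕ → ℤ → Ω → ℝ) (g : ℝ → ℝ) (p m n : ℕ) (ω : Ω) : ℝ :=
  dotProduct (glsScore x g p m n (glsEst x g p n ω) ω)
    (Matrix.mulVec (glsSigma x g p m n ω)⁻¹ (glsScore x g p m n (glsEst x g p n ω) ω))

/-- The (infeasible) empirical autocovariance `γ̂(j)` of the squared GLS residuals. -/
def glsGamma {Ω : Type*} (x : ℕ → ℤ → Ω → ℝ) (g : ℝ → ℝ) (p n j : ℕ) (ω : Ω) : ℝ :=
  (n : ℝ)⁻¹ * ∑ t ∈ Finset.Icc ((j : ℤ) + 1) (n : ℤ),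
    (resid x (glsEst x g p n ω) n t ω ^ 2 - hvol g n t ^ 2) *
      (resid x (glsEst x g p n ω) n (t - (j : ℤ)) ω ^ 2 - hvol g n (t - (j : ℤ)) ^ 2)

def glsOmega4 {Ω : Type*} (x : ℕ → ℤ → Ω → ℝ) (g : ℝ → ℝ) (p n : ℕ) (ω : Ω) : ℝ :=
  ((n : ℝ)⁻¹ * ∑ t ∈ Finset.Icc (1 : ℤ) (n : ℤ), resid x (glsEst x g p n ω) n t ω ^ 4) /
    glsE4 x g p n ω

def glsOmega8 {Ω : Type*} (x : ℕ → ℤ → Ω → ℝ) (g : ℝ → ℝ) (p n : ℕ) (ω : Ω) : ℝ :=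
  ((n : ℝ)⁻¹ * ∑ t ∈ Finset.Icc (1 : ℤ) (n : ℤ), resid x (glsEst x g p n ω) n t ω ^ 8) /
    glsE8 x g p n ω

/-- The (infeasible) GLS Ljung–Box type portmanteau statistic `Q*_GLS`. -/
def QstarGLS {Ω : Type*} (x : ℕ → ℤ → Ω → ℝ) (g : ℝ → ℝ) (p m n : ℕ) (ω : Ω) : ℝ :=
  ((n : ℝ) * ((n : ℝ) + 2) * ∑ i ∈ Finset.Icc 1 m,
      (glsGamma x g p n i ω / glsGamma x g p n 0 ω) ^ 2 / ((n : ℝ) - (i : ℝ))) *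
    (glsOmega4 x g p n ω ^ 2 / glsOmega8 x g p n ω)

/-- Kernel weights entries `K_{ti}` (with `K_{tt} = 0`). -/
def kerEntry (K : ℝ → ℝ) (n : ℕ) (b : ℝ) (t i : ℤ) : ℝ :=
  if t = i then 0 else K (((t : ℝ) - (i : ℝ)) / ((n : ℝ) * b))

/-- Kernel weights `w_{ti}`. -/
def kerWeight (K : ℝ → ℝ) (n : ℕ) (b : ℝ) (t i : ℤ) : ℝ :=
  kerEntry K n b t i / ∑ j ∈ Finset.Icc (1 : ℤ) (n : ℤ), kerEntry K n b t j

/-- The kernel estimator `ĥ_t²` of the variance, built from the squared OLS residuals. -/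
def hhatSq {Ω : Type*} (x : ℕ → ℤ → Ω → ℝ) (K : ℝ → ℝ) (p n : ℕ) (b : ℝ) (t : ℤ)
    (ω : Ω) : ℝ :=
  ∑ i ∈ Finset.Icc (1 : ℤ) (n : ℤ), kerWeight K n b t i * resid x (olsEst x p n ω) n i ω ^ 2

/-- The design matrix of the adaptive (ALS) estimator. -/
def alsMat {Ω : Type*} (x : ℕ → ℤ → Ω → ℝ) (K : ℝ → ℝ) (p n : ℕ) (b : ℝ) (ω : Ω) :
    Matrix (Fin p) (Fin p) ℝ :=
  Matrix.of fun i j => ∑ t ∈ Finset.Icc (1 : ℤ) (n : ℤ),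
    (hhatSq x K p n b t ω)⁻¹ * (x n (t - 1 - (i : ℤ)) ω * x n (t - 1 - (j : ℤ)) ω)

def alsVec {Ω : Type*} (x : ℕ → ℤ → Ω → ℝ) (K : ℝ → ℝ) (p n : ℕ) (b : ℝ) (ω : Ω) :
    Fin p → ℝ :=
  fun i => ∑ t ∈ Finset.Icc (1 : ℤ) (n : ℤ),
    (hhatSq x K p n b t ω)⁻¹ * (x n t ω * x n (t - 1 - (i : ℤ)) ω)

/-- The adaptive estimator `θ̃`. -/
def alsEst {Ω : Type*} (x : ℕ → ℤ → Ω → ℝ) (K : ℝ → ℝ) (p n : ℕ) (b : ℝ) (ω : Ω) :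
    Fin p → ℝ :=
  Matrix.mulVec (alsMat x K p n b ω)⁻¹ (alsVec x K p n b ω)

/-- The approximated (adaptive) score vector `S̃(θ̃)`. -/
def alsScore {Ω : Type*} (x : ℕ → ℤ → Ω → ℝ) (K : ℝ → ℝ) (p m n : ℕ) (b : ℝ) (ω : Ω) :
    Fin m → ℝ :=
  fun j => (1 / (2 * Real.sqrt (n : ℝ))) * ∑ t ∈ Finset.Icc (1 : ℤ) (n : ℤ),
    ((resid x (alsEst x K p n b ω) n t ω ^ 2 / hhatSq x K p n b t ω - 1) *
      (resid x (alsEst x K p n b ω) n (t - ((j : ℤ) + 1)) ω ^ 2 / hhatSq x K p n b t ω))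

def alsE4 {Ω : Type*} (x : ℕ → ℤ → Ω → ℝ) (K : ℝ → ℝ) (p n : ℕ) (b : ℝ) (ω : Ω) : ℝ :=
  (n : ℝ)⁻¹ * ∑ t ∈ Finset.Icc (1 : ℤ) (n : ℤ),
    resid x (alsEst x K p n b ω) n t ω ^ 4 / (hhatSq x K p n b t ω) ^ 2

def alsE2 {Ω : Type*} (x : ℕ → ℤ → Ω → ℝ) (K : ℝ → ℝ) (p n : ℕ) (b : ℝ) (ω : Ω) : ℝ :=
  (n : ℝ)⁻¹ * ∑ t ∈ Finset.Icc (1 : ℤ) (n : ℤ),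
    resid x (alsEst x K p n b ω) n t ω ^ 2 / hhatSq x K p n b t ω

def alsE8 {Ω : Type*} (x : ℕ → ℤ → Ω → ℝ) (K : ℝ → ℝ) (p n : ℕ) (b : ℝ) (ω : Ω) : ℝ :=
  (n : ℝ)⁻¹ * ∑ t ∈ Finset.Icc (1 : ℤ) (n : ℤ),
    resid x (alsEst x K p n b ω) n t ω ^ 8 / (hhatSq x K p n b t ω) ^ 4

/-- The estimated weight matrix `Σ̃` of the adaptive ARCH-LM statistic. -/
def alsSigma {Ω : Type*} (x : ℕ → ℤ → Ω → ℝ) (K : ℝ → ℝ) (p m n : ℕ) (b : ℝ) (ω : Ω) :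
    Matrix (Fin m) (Fin m) ℝ :=
  sigmaMat m (alsE4 x K p n b ω - (alsE2 x K p n b ω) ^ 2) (alsE4 x K p n b ω)

/-- The adaptive ARCH-LM statistic `Q_ALS`. -/
def QALS {Ω : Type*} (x : ℕ → ℤ → Ω → ℝ) (K : ℝ → ℝ) (p m n : ℕ) (b : ℝ) (ω : Ω) : ℝ :=
  dotProduct (alsScore x K p m n b ω)
    (Matrix.mulVec (alsSigma x K p m n b ω)⁻¹ (alsScore x K p m n b ω))

/-- The adaptive empirical autocovariance `γ̃(j)` of the squared residuals. -/
def alsGamma {Ω : Type*} (x : ℕ → ℤ → Ω → ℝ) (K : ℝ → ℝ) (p n j : ℕ) (b : ℝ) (ω : Ω) : ℝ :=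
  (n : ℝ)⁻¹ * ∑ t ∈ Finset.Icc ((j : ℤ) + 1) (n : ℤ),
    (resid x (alsEst x K p n b ω) n t ω ^ 2 - hhatSq x K p n b t ω) *
      (resid x (alsEst x K p n b ω) n (t - (j : ℤ)) ω ^ 2 - hhatSq x K p n b (t - (j : ℤ)) ω)

def alsOmega4 {Ω : Type*} (x : ℕ → ℤ → Ω → ℝ) (K : ℝ → ℝ) (p n : ℕ) (b : ℝ) (ω : Ω) : ℝ :=
  ((n : ℝ)⁻¹ * ∑ t ∈ Finset.Icc (1 : ℤ) (n : ℤ), resid x (alsEst x K p n b ω) n t ω ^ 4) /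
    alsE4 x K p n b ω

def alsOmega8 {Ω : Type*} (x : ℕ → ℤ → Ω → ℝ) (K : ℝ → ℝ) (p n : ℕ) (b : ℝ) (ω : Ω) : ℝ :=
  ((n : ℝ)⁻¹ * ∑ t ∈ Finset.Icc (1 : ℤ) (n : ℤ), resid x (alsEst x K p n b ω) n t ω ^ 8) /
    alsE8 x K p n b ω

/-- The adaptive portmanteau statistic `Q*_ALS`. -/
def QstarALS {Ω : Type*} (x : ℕ → ℤ → Ω → ℝ) (K : ℝ → ℝ) (p m n : ℕ) (b : ℝ) (ω : Ω) : ℝ :=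
  ((n : ℝ) * ((n : ℝ) + 2) * ∑ i ∈ Finset.Icc 1 m,
      (alsGamma x K p n i b ω / alsGamma x K p n 0 b ω) ^ 2 / ((n : ℝ) - (i : ℝ))) *
    (alsOmega4 x K p n b ω ^ 2 / alsOmega8 x K p n b ω)

/-- The squared ARCH(1)-type error process started in the infinite past,
`u_t² = Σ_{i≥0} α^i h_{t-i}² ε_{t-i}² ⋯ ε_t²`, with `h_l = c0` for `l ≤ 0`. -/
def usqARCH {Ω : Type*} (g : ℝ → ℝ) (c0 α : ℝ) (ε : ℤ → Ω → ℝ) (n : ℕ) (t : ℤ) (ω : Ω) : ℝ :=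
  ∑' i : ℕ, α ^ i * (if 1 ≤ t - (i : ℤ) then g (((t : ℝ) - (i : ℝ)) / (n : ℝ)) else c0) ^ 2 *
    ∏ k ∈ Finset.range (i + 1), (ε (t - (k : ℤ)) ω) ^ 2

/-- Assumption A2(i) on the kernel `K`. -/
def KernelAssumption (K : ℝ → ℝ) : Prop :=
  Measurable K ∧ (∀ v, 0 ≤ K v) ∧ (∃ CK : ℝ, ∀ v, K v ≤ CK) ∧ (∫ v, K v = 1) ∧
    MonotoneOn K (Set.Iic 0) ∧ AntitoneOn K (Set.Ici 0) ∧
    Integrable (fun v => v ^ 2 * K v) ∧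
    (∃ (S : Finset ℝ) (K' : ℝ → ℝ), (∀ v ∉ S, HasDerivAt K (K' v) v) ∧
      Integrable (fun v => |v * K' v|)) ∧
    (∃ τ : ℝ, 0 < τ ∧
      Integrable (fun s => |s| ^ τ * ‖FourierTransform.fourier (fun v : ℝ => (K v : ℂ)) s‖))

/-!
With `Z t = ε t ^ 2 - 1`, each `A k n` is a deterministic weighted sum of the lag products
`Z t * Z (t - k)`, and the `Z t` are independent, centred and square integrable. Hence
`E[A k n] = 0`, and for `i ≠ j` every cross moment `E[Z t Z (t - i) Z u Z (u - j)]` vanishes: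
one of the four indices occurs exactly once, and its factor is independent of the other three.
So the covariance is `0` for every `n`.
-/

theorem integral_finset_sum_mul_eq_zero {Ω ι : Type*} [MeasurableSpace Ω] {μ : Measure Ω}
    {s : Finset ι} {f : ι → Ω → ℝ} (c : ι → ℝ) (hf : ∀ t ∈ s, Integrable (f t) μ)
    (hf0 : ∀ t ∈ s, ∫ ω, f t ω ∂μ = 0) :
    ∫ ω, ∑ t ∈ s, c t * f t ω ∂μ = 0 := by
  rw [integral_finsetSum s fun t ht => (hf t ht).const_mul (c t)]
  exact Finset.sum_eq_zero fun t ht => by rw [integral_const_mul, hf0 t ht, mul_zero]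

namespace ProbabilityTheory

variable {Ω : Type*} [MeasurableSpace Ω] {μ : Measure Ω}

theorem iIndepFun.integral_mul_eq_zero_of_notMem {ι : Type*} {X : ι → Ω → ℝ}
    (hX : iIndepFun X μ) (hXm : ∀ i, Measurable (X i)) {k : ι} (hk : μ[X k] = 0)
    {s : Finset ι} (hks : k ∉ s) {F : (s → ℝ) → ℝ} (hF : Measurable F) :
    ∫ ω, X k ω * F (fun l => X l ω) ∂μ = 0 := by
  have hindep : IndepFun (X k) (fun ω => F (fun l => X l ω)) μ :=
    (hX.indepFun_finset {k} s (Finset.disjoint_singleton_left.2 hks) hXm).comp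
      (measurable_pi_apply (⟨k, Finset.mem_singleton_self k⟩ : ({k} : Finset ι))) hF
  rw [hindep.integral_fun_mul_eq_mul_integral (hXm k).aestronglyMeasurable
    (hF.comp (measurable_pi_lambda _ fun l => hXm l)).aestronglyMeasurable, hk, zero_mul]

theorem IndepFun.memLp_two_mul {X Y : Ω → ℝ} (hXY : IndepFun X Y μ) (hX : MemLp X 2 μ)
    (hY : MemLp Y 2 μ) : MemLp (X * Y) 2 μ := by
  refine (memLp_two_iff_integrable_sq (hX.1.mul hY.1)).2 ?_
  have hsq : IndepFun (fun ω => X ω ^ 2) (fun ω => Y ω ^ 2) μ :=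
    hXY.comp (measurable_id.pow_const 2) (measurable_id.pow_const 2)
  simp only [Pi.mul_apply, mul_pow]
  exact hsq.integrable_mul hX.integrable_sq hY.integrable_sq

end ProbabilityTheory

def lagSum {Ω : Type*} (Z : ℕ → Ω → ℝ) (c : ℕ → ℝ) (k n : ℕ) (ω : Ω) : ℝ :=
  ∑ t ∈ Finset.Icc (k + 1) n, c t * (Z t ω * Z (t - k) ω)

section LagProducts

variable {Ω : Type*} [MeasurableSpace Ω] {μ : Measure Ω} {Z : ℕ → Ω → ℝ}

theorem memLp_two_mul_of_ne (hZ : iIndepFun Z μ) (hZ2 : ∀ t, MemLp (Z t) 2 μ) {t s : ℕ}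
    (hts : t ≠ s) : MemLp (fun ω => Z t ω * Z s ω) 2 μ :=
  (hZ.indepFun hts).memLp_two_mul (hZ2 t) (hZ2 s)

theorem integral_lagProd_eq_zero (hZ : iIndepFun Z μ) (hZm : ∀ t, Measurable (Z t))
    (hZ0 : ∀ t, μ[Z t] = 0) {k t : ℕ} (hk : 1 ≤ k) (hkt : k ≤ t) :
    ∫ ω, Z t ω * Z (t - k) ω ∂μ = 0 :=
  hZ.integral_mul_eq_zero_of_notMem hZm (hZ0 t) (s := {t - k}) (by simp; omega)
    (F := fun x => x ⟨t - k, by simp⟩) (by fun_prop)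

theorem integral_lagProd_mul_lagProd_eq_zero (hZ : iIndepFun Z μ)
    (hZm : ∀ t, Measurable (Z t)) (hZ0 : ∀ t, μ[Z t] = 0) {i j t u : ℕ} (hi : 1 ≤ i)
    (hj : 1 ≤ j) (hij : i ≠ j) (hit : i ≤ t) (hju : j ≤ u) :
    ∫ ω, Z t ω * Z (t - i) ω * (Z u ω * Z (u - j) ω) ∂μ = 0 := by
  -- the index occurring exactly once: the largest one if `t ≠ u`, otherwise `t - i`
  rcases lt_trichotomy t u with htu | rfl | htu
  · rw [← hZ.integral_mul_eq_zero_of_notMem hZm (hZ0 u) (s := {t, t - i, u - j})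
      (by simp; omega) (by fun_prop)
      (F := fun x => x ⟨t, by simp⟩ * x ⟨t - i, by simp⟩ * x ⟨u - j, by simp⟩)]
    congr 1 with ω
    ring
  · rw [← hZ.integral_mul_eq_zero_of_notMem hZm (hZ0 (t - i)) (s := {t, t - j})
      (by simp; omega) (by fun_prop) (F := fun x => x ⟨t, by simp⟩ ^ 2 * x ⟨t - j, by simp⟩)]
    congr 1 with ω
    ring
  · rw [← hZ.integral_mul_eq_zero_of_notMem hZm (hZ0 t) (s := {t - i, u, u - j})
      (by simp; omega) (by fun_prop)
      (F := fun x => x ⟨t - i, by simp⟩ * x ⟨u, by simp⟩ * x ⟨u - j, by simp⟩)]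
    congr 1 with ω
    ring

theorem integral_lagSum_eq_zero [IsProbabilityMeasure μ] (hZ : iIndepFun Z μ)
    (hZm : ∀ t, Measurable (Z t)) (hZ0 : ∀ t, μ[Z t] = 0) (hZ2 : ∀ t, MemLp (Z t) 2 μ)
    (c : ℕ → ℝ) {k : ℕ} (hk : 1 ≤ k) (n : ℕ) : ∫ ω, lagSum Z c k n ω ∂μ = 0 := by
  refine integral_finset_sum_mul_eq_zero c (fun t ht => ?_) (fun t ht => ?_) <;>
    rw [Finset.mem_Icc] at ht
  · exact (memLp_two_mul_of_ne hZ hZ2 (by omega)).integrable one_le_two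
  · exact integral_lagProd_eq_zero hZ hZm hZ0 hk (by omega)

theorem integral_lagSum_mul_lagSum_eq_zero (hZ : iIndepFun Z μ)
    (hZm : ∀ t, Measurable (Z t)) (hZ0 : ∀ t, μ[Z t] = 0) (hZ2 : ∀ t, MemLp (Z t) 2 μ)
    (a b : ℕ → ℝ) {i j : ℕ} (hi : 1 ≤ i) (hj : 1 ≤ j) (hij : i ≠ j) (n : ℕ) :
    ∫ ω, lagSum Z a i n ω * lagSum Z b j n ω ∂μ = 0 := by
  have hprod : ∀ ω, lagSum Z a i n ω * lagSum Z b j n ω =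
      ∑ p ∈ Finset.Icc (i + 1) n ×ˢ Finset.Icc (j + 1) n, a p.1 * b p.2 *
        (Z p.1 ω * Z (p.1 - i) ω * (Z p.2 ω * Z (p.2 - j) ω)) := fun ω => by
    simp only [lagSum, Finset.sum_mul_sum, Finset.sum_product]
    exact Finset.sum_congr rfl fun t _ => Finset.sum_congr rfl fun u _ => by ring
  simp only [hprod]
  refine integral_finset_sum_mul_eq_zero _ (fun p hp => ?_) (fun p hp => ?_) <;>
    rw [Finset.mem_product, Finset.mem_Icc, Finset.mem_Icc] at hp
  · exact (memLp_two_mul_of_ne hZ hZ2 (by omega)).integrable_mul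
      (memLp_two_mul_of_ne hZ hZ2 (by omega))
  · exact integral_lagProd_mul_lagProd_eq_zero hZ hZm hZ0 hi hj hij (by omega) (by omega)

end LagProducts

theorem memLp_two_sq_sub_one {Ω : Type*} [MeasurableSpace Ω] {μ : Measure Ω}
    [IsFiniteMeasure μ] {X : Ω → ℝ} (hX : AEStronglyMeasurable X μ) {s : ℝ} (hs : 4 ≤ s)
    (hint : Integrable (fun ω => |X ω| ^ s) μ) : MemLp (fun ω => X ω ^ 2 - 1) 2 μ := by
  have h4 : Integrable (fun ω => ‖X ω‖ ^ (4 : ℝ)) μ :=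
    integrable_norm_rpow_of_le hX (by norm_num) (by linarith) hs hint
  refine (memLp_two_iff_integrable_sq (by fun_prop)).2 <|
    (h4.add (integrable_const 1)).mono' (by fun_prop) (ae_of_all _ fun ω => ?_)
  have hX4 : ‖X ω‖ ^ (4 : ℝ) = X ω ^ 4 := by
    rw [Real.norm_eq_abs, Real.rpow_ofNat, Even.pow_abs ⟨2, rfl⟩]
  rw [Pi.add_apply, hX4, Real.norm_eq_abs, abs_of_nonneg (sq_nonneg _)]
  nlinarith [sq_nonneg (X ω)]

theorem stmt_5_general {Ω : Type*} [MeasurableSpace Ω] (μ : Measure Ω) [IsProbabilityMeasure μ]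
    (g : ℝ → ℝ)
    (ε : ℕ → Ω → ℝ) (hiid : IsIIDSeq μ ε 0)
    (hvar : ∫ ω, (ε 0 ω) ^ 2 ∂μ = 1)
    (hmom : ∃ s : ℝ, 8 < s ∧ Integrable (fun ω => |ε 0 ω| ^ s) μ)
    (i j : ℕ) (hi : 1 ≤ i) (hj : 1 ≤ j) (hij : i ≠ j)
    (A : ℕ → ℕ → Ω → ℝ)
    (hA : ∀ k n ω, A k n ω = (Real.sqrt (n : ℝ))⁻¹ *
      ∑ t ∈ Finset.Icc (k + 1) n,
        ((g ((t : ℝ) / (n : ℝ)) * ε t ω) ^ 2 - g ((t : ℝ) / (n : ℝ)) ^ 2) *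
          ((g (((t : ℝ) - (k : ℝ)) / (n : ℝ)) * ε (t - k) ω) ^ 2 -
            g (((t : ℝ) - (k : ℝ)) / (n : ℝ)) ^ 2)) :
    Tendsto (fun n =>
        (∫ ω, A i n ω * A j n ω ∂μ) - (∫ ω, A i n ω ∂μ) * (∫ ω, A j n ω ∂μ))
      atTop (𝓝 0) := by
  obtain ⟨hεm, hind, hident⟩ := hiid
  obtain ⟨s, hs, hsint⟩ := hmom
  have hsq : Measurable fun x : ℝ => x ^ 2 - 1 := by fun_prop
  set Z : ℕ → Ω → ℝ := fun t ω => ε t ω ^ 2 - 1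
  have hZ : iIndepFun Z μ := hind.comp (fun _ x => x ^ 2 - 1) fun _ => hsq
  have hZm : ∀ t, Measurable (Z t) := fun t => hsq.comp (hεm t)
  have hZ2 : ∀ t, MemLp (Z t) 2 μ := fun t => ((hident t).comp hsq).memLp_iff.2 <|
    memLp_two_sq_sub_one (hεm 0).aestronglyMeasurable (by linarith) hsint
  have hZ0 : ∀ t, μ[Z t] = 0 := fun t => calc
    μ[Z t] = ∫ ω, ε 0 ω ^ 2 - 1 ∂μ := ((hident t).comp hsq).integral_eq
    _ = 0 := by
      rw [integral_sub (.of_integral_ne_zero (by simp [hvar])) (integrable_const 1), hvar]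
      simp
  have hAZ : ∀ k n, A k n = lagSum Z (fun t => (Real.sqrt (n : ℝ))⁻¹ *
      (g ((t : ℝ) / (n : ℝ)) ^ 2 * g (((t : ℝ) - (k : ℝ)) / (n : ℝ)) ^ 2)) k n := by
    intro k n
    ext ω
    rw [hA, lagSum, Finset.mul_sum]
    exact Finset.sum_congr rfl fun t _ => by ring
  simp only [hAZ, integral_lagSum_mul_lagSum_eq_zero hZ hZm hZ0 hZ2 _ _ hi hj hij,
    integral_lagSum_eq_zero hZ hZm hZ0 hZ2 _ hi, integral_lagSum_eq_zero hZ hZm hZ0 hZ2 _ hj,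
    mul_zero, sub_zero]
  exact tendsto_const_nhds

/-- Lemma 1, third part: asymptotically vanishing covariance between
normalized empirical autocovariances at distinct lags. -/
theorem stmt_5 {Ω : Type*} [MeasurableSpace Ω] (μ : Measure Ω) [IsProbabilityMeasure μ]
    (g : ℝ → ℝ) (hgpos : ∀ r ∈ Set.Ioc (0 : ℝ) 1, 0 < g r)
    (hgbdd : ∃ C : ℝ, ∀ r ∈ Set.Ioc (0 : ℝ) 1, |g r| ≤ C)
    (hglip : PiecewiseLipschitzOn01 g)
    (ε : ℕ → Ω → ℝ) (hiid : IsIIDSeq μ ε 0)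
    (hmean : ∫ ω, ε 0 ω ∂μ = 0) (hvar : ∫ ω, (ε 0 ω) ^ 2 ∂μ = 1)
    (hmom : ∃ s : ℝ, 8 < s ∧ Integrable (fun ω => |ε 0 ω| ^ s) μ)
    (i j : ℕ) (hi : 1 ≤ i) (hj : 1 ≤ j) (hij : i ≠ j)
    (A : ℕ → ℕ → Ω → ℝ)
    (hA : ∀ k n ω, A k n ω = (Real.sqrt (n : ℝ))⁻¹ *
      ∑ t ∈ Finset.Icc (k + 1) n,
        ((g ((t : ℝ) / (n : ℝ)) * ε t ω) ^ 2 - g ((t : ℝ) / (n : ℝ)) ^ 2) *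
          ((g (((t : ℝ) - (k : ℝ)) / (n : ℝ)) * ε (t - k) ω) ^ 2 -
            g (((t : ℝ) - (k : ℝ)) / (n : ℝ)) ^ 2)) :
    Tendsto (fun n =>
        (∫ ω, A i n ω * A j n ω ∂μ) - (∫ ω, A i n ω ∂μ) * (∫ ω, A j n ω ∂μ))
      atTop (𝓝 0) :=
  stmt_5_general μ g ε hiid hvar hmom i j hi hj hij A hA

end
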